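/- Let (L,[·,·],α) be a Hom-Lie algebra and D : L → L an α-derivation, i.e. D([x,y]) = [D(x),α(y)] + [α(x),D(y)] for all x,y (and D∘α = α∘D if L is multiplicative). Extend L to L̂ = L ⊕ K·D with brackets [D,x] = D(x), [x,D] = −D(x), [D,D] = 0, and twist α̂ extending α by α̂(D) = D. Then L̂ is a Hom-Lie algebra; it is multiplicative if L is multiplicative and D∘α = α∘D, and its twist is injective if α is injective. -/
import Mathlib


variable {K L : Type*} [Field K] [AddCommGroup L] [Module K L]

/-- The bracket on the extension `L̂ = L ⊕ K·D` of a Hom-Lie algebra by an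
`α`-derivation `D`: `[D,x] = D(x)`, `[x,D] = −D(x)`, `[D,D] = 0`. -/
def derBr (br : L →ₗ[K] L →ₗ[K] L) (D : L →ₗ[K] L) (p q : L × K) : L × K :=
  (br p.1 q.1 + p.2 • D q.1 - q.2 • D p.1, 0)

/-- The twist on the extension `L̂ = L ⊕ K·D`, with `α̂(D) = D`. -/
def derTw (α : L →ₗ[K] L) (p : L × K) : L × K := (α p.1, p.2)

/-- Extending a Hom-Lie algebra by an `α`-derivation gives a Hom-Lie algebra,
which is multiplicative if `L` is multiplicative and `D∘α = α∘D`, and whose twist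
is injective if `α` is. -/
theorem stmt18 (br : L →ₗ[K] L →ₗ[K] L) (α : L →ₗ[K] L) (D : L →ₗ[K] L)
    (hanti : ∀ x y : L, br y x = - br x y)
    (hjac : ∀ x y z : L,
      br (br x y) (α z) + br (br z x) (α y) + br (br y z) (α x) = 0)
    (hder : ∀ x y : L, D (br x y) = br (D x) (α y) + br (α x) (D y)) :
    (∀ p q : L × K, derBr br D q p = - derBr br D p q) ∧
    (∀ p q r : L × K,
      derBr br D (derBr br D p q) (derTw α r)
        + derBr br D (derBr br D r p) (derTw α q)
        + derBr br D (derBr br D q r) (derTw α p) = 0) ∧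
    ((∀ x y : L, α (br x y) = br (α x) (α y)) → (∀ x : L, D (α x) = α (D x)) →
      ∀ p q : L × K, derTw α (derBr br D p q) = derBr br D (derTw α p) (derTw α q)) ∧
    (Function.Injective α → Function.Injective (derTw α : L × K → L × K)) := by
  refine ⟨?_, ?_, ?_, ?_⟩
  · intro p q
    simp only [derBr, Prod.ext_iff, Prod.fst_neg, Prod.snd_neg, hanti p.1 q.1, neg_zero,
      and_true]
    abel
  · intro p q r
    apply Prod.ext
    · simp only [derBr, derTw, map_add, map_sub, map_smul, LinearMap.add_apply,
        LinearMap.sub_apply, LinearMap.smul_apply, hder, zero_smul, sub_zero, add_zero,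
        zero_sub, zero_add, Prod.fst_add, Prod.fst_zero]
      linear_combination (norm := module) hjac p.1 q.1 r.1 + (-p.2) • hanti (D r.1) (α q.1)
        + (-q.2) • hanti (D p.1) (α r.1) + (-r.2) • hanti (D q.1) (α p.1)
    · simp [derBr]
  · intro hmul hcomm p q
    simp [derBr, derTw, hmul, hcomm, Prod.ext_iff]
  · intro hα p q h
    simp only [derTw, Prod.ext_iff] at h
    exact Prod.ext (hα h.1) h.2
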